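/- arXiv:1503.00519 — 9 statements merged into one kernel-verified Lean document; each statement's English description precedes it below -/
import Mathlib

section
/- Sylvester's determinantal identity: det(M) · (a_{t,t}^{(t-1)})^{n-t-1} equals the determinant of the (n-t)×(n-t) matrix whose (i,j) entry is a_{t+i,t+j}^{(t)}, where a_{i,j}^{(t)} denotes the determinant of the (t+1)×(t+1) matrix formed by the leading principal t×t submatrix of M bordered by row i and column j. -/
/-!
Reindex `M` in block form `[[A, B], [C, D]]` with `A` the leading `t × t` block. Multiplying on
the left by `[[1, 0], [-C adj A, det A]]` gives
`det A ^ (n - t) * det M = det A * det (det A • D - C adj A B)`, and the same identity for a single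
bordered row and column shows that each bordered minor is `det A` times an entry of `D` minus the
matching entry of `C adj A B`. Where `det A` is a non-zero-divisor it cancels. In general, replace
`A` by `X + A` over `R[X]`: its determinant is the characteristic polynomial of `-A`, which is
monic and hence a non-zero-divisor, and then set `X = 0`.
-/

open Matrix Polynomial

namespace Matrix

variable {R S : Type*} [CommRing R] [CommRing S] {m n : Type*}

theorem fromBlocks_submatrix_sum_map {α m' n' : Type*} (A : Matrix m m α) (B : Matrix m n α)
    (C : Matrix n m α) (D : Matrix n n α) (f f' : m' → m) (g g' : n' → n) :
    (fromBlocks A B C D).submatrix (Sum.map f g) (Sum.map f' g') =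
      fromBlocks (A.submatrix f f') (B.submatrix f g') (C.submatrix g f') (D.submatrix g g') := by
  ext (i | i) (j | j) <;> rfl

variable [Fintype m] [DecidableEq m]

section

variable [Fintype n] [DecidableEq n]

theorem det_pow_mul_det_fromBlocks (A : Matrix m m R) (B : Matrix m n R) (C : Matrix n m R)
    (D : Matrix n n R) :
    A.det ^ Fintype.card n * (fromBlocks A B C D).det =
      A.det * (A.det • D - C * adjugate A * B).det := by
  have hmul : fromBlocks 1 0 (-(C * adjugate A)) (A.det • 1) * fromBlocks A B C D =
      fromBlocks A B 0 (A.det • D - C * adjugate A * B) := by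
    simp [fromBlocks_multiply, Matrix.neg_mul, Matrix.mul_assoc, adjugate_mul, sub_eq_neg_add]
  have := congrArg det hmul
  rwa [det_mul, det_fromBlocks_zero₁₂, det_fromBlocks_zero₂₁, det_one, one_mul, det_smul,
    det_one, mul_one] at this

end

/-- The `(i, j)` entry is the minor of the leading `m × m` block bordered by row `i` and column
`j`, i.e. the paper's `a^{(t)}_{t+i,t+j}`. -/
def sylvesterMatrix (M : Matrix (m ⊕ n) (m ⊕ n) R) : Matrix n n R :=
  of fun i j => (M.submatrix (Sum.map id fun _ : Fin 1 => i) (Sum.map id fun _ : Fin 1 => j)).det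

theorem sylvesterMatrix_map (f : R →+* S) (M : Matrix (m ⊕ n) (m ⊕ n) R) :
    sylvesterMatrix (M.map f) = (sylvesterMatrix M).map f := by
  ext i j
  simp [sylvesterMatrix, submatrix_map, RingHom.map_det]

theorem sylvesterMatrix_fromBlocks_of_isLeftRegular {A : Matrix m m R} (hA : IsLeftRegular A.det)
    (B : Matrix m n R) (C : Matrix n m R) (D : Matrix n n R) :
    sylvesterMatrix (fromBlocks A B C D) = A.det • D - C * adjugate A * B := by
  ext i j
  have h := det_pow_mul_det_fromBlocks A (B.submatrix id fun _ : Fin 1 => j)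
    (C.submatrix (fun _ : Fin 1 => i) id) (D.submatrix (fun _ : Fin 1 => i) fun _ : Fin 1 => j)
  rw [Fintype.card_fin, pow_one, det_fin_one] at h
  rw [sylvesterMatrix, of_apply, fromBlocks_submatrix_sum_map, submatrix_id_id]
  simpa [Matrix.mul_apply] using hA h

variable [Fintype n] [DecidableEq n]

theorem det_fromBlocks_mul_det_pow_of_isRegular [Nonempty n] {A : Matrix m m R}
    (hA : IsRegular A.det) (B : Matrix m n R) (C : Matrix n m R) (D : Matrix n n R) :
    (fromBlocks A B C D).det * A.det ^ (Fintype.card n - 1) =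
      (sylvesterMatrix (fromBlocks A B C D)).det := by
  rw [sylvesterMatrix_fromBlocks_of_isLeftRegular hA.left]
  refine hA.left ?_
  dsimp only
  rw [← det_pow_mul_det_fromBlocks, ← pow_sub_one_mul Fintype.card_ne_zero]
  ring

theorem det_fromBlocks_mul_det_pow [Nonempty n] (A : Matrix m m R) (B : Matrix m n R)
    (C : Matrix n m R) (D : Matrix n n R) :
    (fromBlocks A B C D).det * A.det ^ (Fintype.card n - 1) =
      (sylvesterMatrix (fromBlocks A B C D)).det := by
  have hA : (charmatrix (-A)).map (eval 0) = A := by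
    ext i j
    rcases eq_or_ne i j with rfl | h <;> simp [*]
  have h := congrArg (evalRingHom (0 : R)) <|
    det_fromBlocks_mul_det_pow_of_isRegular (charpoly_monic (-A)).isRegular
      (B.map Polynomial.C) (C.map Polynomial.C) (D.map Polynomial.C)
  rw [map_mul, map_pow, RingHom.map_det, RingHom.map_det, RingHom.map_det, RingHom.mapMatrix_apply,
    RingHom.mapMatrix_apply, RingHom.mapMatrix_apply, ← sylvesterMatrix_map, fromBlocks_map] at h
  simpa [hA, Matrix.map_map, Function.comp_def] using h

end Matrix

/-- Sylvester's determinantal identity. -/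
theorem sylvester_identity {K : Type*} [Field K] {n t : ℕ} (ht : t < n)
    (M : Matrix (Fin n) (Fin n) K) :
    M.det * ((M.submatrix (Fin.castLE ht.le) (Fin.castLE ht.le)).det) ^ (n - t - 1) =
      (Matrix.of (fun i j : Fin (n - t) =>
        (M.submatrix
          (Fin.snoc (Fin.castLE ht.le) (⟨t + i, by have := i.isLt; omega⟩ : Fin n))
          (Fin.snoc (Fin.castLE ht.le) (⟨t + j, by have := j.isLt; omega⟩ : Fin n))).det)).det := by
  let e : Fin t ⊕ Fin (n - t) ≃ Fin n := finSumFinEquiv.trans (finCongr (by omega))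
  have : Nonempty (Fin (n - t)) := ⟨⟨0, by omega⟩⟩
  have hsnoc (i : Fin (n - t)) :
      Fin.snoc (Fin.castLE ht.le) (⟨t + i, by omega⟩ : Fin n) ∘ finSumFinEquiv =
        e ∘ Sum.map id fun _ : Fin 1 => i := by
    ext (k | k) : 1
    · exact (Fin.snoc_castSucc ..).trans (Fin.ext rfl)
    · rw [Fin.fin_one_eq_zero k]
      exact (Fin.snoc_last ..).trans (Fin.ext rfl)
  have h := det_fromBlocks_mul_det_pow (toBlocks₁₁ (M.submatrix e e))
    (toBlocks₁₂ (M.submatrix e e)) (toBlocks₂₁ (M.submatrix e e)) (toBlocks₂₂ (M.submatrix e e))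
  rw [fromBlocks_toBlocks, det_submatrix_equiv_self, Fintype.card_fin] at h
  convert h using 3
  · rfl
  · ext i j
    rw [of_apply, ← det_submatrix_equiv_self finSumFinEquiv, submatrix_submatrix, hsnoc, hsnoc]
    rfl
end

section
/- Chió pivotal condensation: if a_{11} ≠ 0, then det(M) = det(B) / (a_{11})^{n-2}, where B is the (n-1)×(n-1) matrix with entries b_{ij} = a_{11}·a_{i+1,j+1} − a_{1,j+1}·a_{i+1,1}. -/
/-!
For an `(m + 1) × (m + 1)` matrix `M`, scale every row but the first by the pivot `a = M 0 0`
(multiplying the determinant by `a ^ m`) and then clear the first column below the pivot by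
subtracting `M i 0` times the first row from row `i`. The rows below the pivot become the 2×2
minors `a * M i j - M 0 j * M i 0`, so expanding along the first column gives
`a ^ m * det M = a * det B` over any commutative ring; over a field, cancelling `a ^ (m + 1)`
yields Chió's formula.
-/

namespace Matrix

variable {R : Type*} [CommRing R] {m : ℕ}

def chioCondensed (M : Matrix (Fin (m + 1)) (Fin (m + 1)) R) : Matrix (Fin m) (Fin m) R :=
  of fun i j => M 0 0 * M i.succ j.succ - M 0 j.succ * M i.succ 0

theorem det_eq_mul_det_submatrix_succ_of_col_zero (A : Matrix (Fin (m + 1)) (Fin (m + 1)) R)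
    (hA : ∀ i : Fin m, A i.succ 0 = 0) :
    A.det = A 0 0 * (A.submatrix Fin.succ Fin.succ).det := by
  rw [det_succ_column_zero, Fin.sum_univ_succ]
  simp [hA]

theorem pow_mul_det_eq_mul_det_chioCondensed (M : Matrix (Fin (m + 1)) (Fin (m + 1)) R) :
    M 0 0 ^ m * M.det = M 0 0 * (chioCondensed M).det := by
  set a := M 0 0
  let scaled : Matrix (Fin (m + 1)) (Fin (m + 1)) R :=
    of fun i j => (if i = 0 then 1 else a) * M i j
  let cleared : Matrix (Fin (m + 1)) (Fin (m + 1)) R :=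
    of fun i j => if i = 0 then M 0 j else a * M i j - M i 0 * M 0 j
  have det_scaled : scaled.det = a ^ m * M.det := by
    rw [det_mul_column, Fin.prod_univ_succ]
    simp [Fin.succ_ne_zero]
  have det_cleared : cleared.det = scaled.det := by
    refine det_eq_of_forall_row_eq_smul_add_const (fun i => if i = 0 then 0 else -M i 0) 0
      (by simp) fun i j => ?_
    by_cases hi : i = 0
    · simp [cleared, scaled, hi]
    · simp only [cleared, scaled, of_apply, hi, ↓reduceIte, one_mul, neg_mul]
      ring
  have cleared_col_zero (i : Fin m) : cleared i.succ 0 = 0 := by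
    simp [cleared, a, mul_comm]
  rw [← det_scaled, ← det_cleared, det_eq_mul_det_submatrix_succ_of_col_zero _ cleared_col_zero]
  congr 2
  ext i j
  simp only [cleared, chioCondensed, a, submatrix_apply, of_apply, Fin.succ_ne_zero, ↓reduceIte]
  ring

theorem det_eq_det_chioCondensed_div {K : Type*} [Field K]
    (M : Matrix (Fin (m + 2)) (Fin (m + 2)) K) (h : M 0 0 ≠ 0) :
    M.det = (chioCondensed M).det / M 0 0 ^ m := by
  rw [eq_div_iff (pow_ne_zero _ h)]
  refine mul_left_cancel₀ h ?_
  rw [← pow_mul_det_eq_mul_det_chioCondensed]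
  ring

end Matrix

/-- Chió pivotal condensation. -/
theorem chio_condensation {K : Type*} [Field K] {n : ℕ} (hn : 2 ≤ n)
    (M : Matrix (Fin n) (Fin n) K)
    (h : M ⟨0, by omega⟩ ⟨0, by omega⟩ ≠ 0) :
    M.det =
      (Matrix.of (fun i j : Fin (n - 1) =>
        M ⟨0, by omega⟩ ⟨0, by omega⟩ *
          M ⟨i + 1, by have := i.isLt; omega⟩ ⟨j + 1, by have := j.isLt; omega⟩ -
        M ⟨0, by omega⟩ ⟨j + 1, by have := j.isLt; omega⟩ *
          M ⟨i + 1, by have := i.isLt; omega⟩ ⟨0, by omega⟩)).det /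
      (M ⟨0, by omega⟩ ⟨0, by omega⟩) ^ (n - 2) := by
  obtain ⟨m, rfl⟩ : ∃ m, n = m + 2 := ⟨n - 2, by omega⟩
  exact Matrix.det_eq_det_chioCondensed_div M h
end

section
/- The 2×2 bordered-determinant rule: det(M)·det(D) = det(A')·det(D') − det(B')·det(C'), where A', B', C', D' are the four (n-1)×(n-1) matrices obtained by bordering D with the appropriate combinations of the vectors b, c, f, h and the scalars a, e, g, l. -/
/-!
Write `M = [[A, B], [C, D]]` and `adjugate M = [[P, Q], [R, S]]` in blocks. Since
`M * adjugate M = det M • 1`, we get `M * [[P, 0], [R, 1]] = [[det M • 1, B], [0, D]]`, hence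
`det M * det P = (det M) ^ |m| * det D`. For the generic matrix over `ℤ[X_ij]` the factor `det M`
cancels, which gives Jacobi's `det P = (det M) ^ (|m| - 1) * det D` over every commutative ring.
Taking for `m` the first and the last index, the entries of `P` are the four bordered minors of
the theorem, the two off-diagonal ones with the same sign `(-1) ^ (n + 1)`.
-/

namespace Matrix

variable {m n R : Type*} [Fintype m] [Fintype n] [DecidableEq m] [DecidableEq n] [CommRing R]

theorem det_mul_det_toBlocks₁₁_adjugate (M : Matrix (m ⊕ n) (m ⊕ n) R) :
    M.det * M.adjugate.toBlocks₁₁.det = M.det ^ Fintype.card m * M.toBlocks₂₂.det := by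
  set d := M.det
  set N := M.adjugate
  have hMN : M * N = d • 1 := mul_adjugate M
  rw [← fromBlocks_toBlocks M, ← fromBlocks_toBlocks N, fromBlocks_multiply, ← fromBlocks_one,
    fromBlocks_smul, fromBlocks_inj] at hMN
  have hMB : M * fromBlocks N.toBlocks₁₁ 0 N.toBlocks₂₁ 1 =
      fromBlocks (d • 1) M.toBlocks₁₂ 0 M.toBlocks₂₂ := by
    conv_lhs => rw [← fromBlocks_toBlocks M]
    simp [fromBlocks_multiply, hMN.1, hMN.2.2.1]
  have := congrArg det hMB
  rwa [det_mul, det_fromBlocks_zero₁₂, det_fromBlocks_zero₂₁, det_one, mul_one, det_smul, det_one,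
    mul_one] at this

theorem det_toBlocks₁₁_adjugate_of_det_ne_zero [IsDomain R] [Nonempty m]
    (M : Matrix (m ⊕ n) (m ⊕ n) R) (hM : M.det ≠ 0) :
    M.adjugate.toBlocks₁₁.det = M.det ^ (Fintype.card m - 1) * M.toBlocks₂₂.det := by
  apply mul_left_cancel₀ hM
  rw [det_mul_det_toBlocks₁₁_adjugate, ← mul_assoc, ← pow_succ',
    Nat.sub_add_cancel Fintype.card_pos]

/-- Jacobi's complementary minor theorem. -/
theorem det_toBlocks₁₁_adjugate [Nonempty m] (M : Matrix (m ⊕ n) (m ⊕ n) R) :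
    M.adjugate.toBlocks₁₁.det = M.det ^ (Fintype.card m - 1) * M.toBlocks₂₂.det := by
  let X := mvPolynomialX (m ⊕ n) (m ⊕ n) ℤ
  let φ := MvPolynomial.eval₂Hom (Int.castRingHom R) fun p : (m ⊕ n) × (m ⊕ n) => M p.1 p.2
  have hφX : φ.mapMatrix X = M := mvPolynomialX_map_eval₂ _ M
  have hX := congrArg φ <|
    det_toBlocks₁₁_adjugate_of_det_ne_zero X (det_mvPolynomialX_ne_zero _ _)
  rw [map_mul, map_pow, RingHom.map_det, RingHom.map_det, RingHom.map_det] at hX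
  rw [← hφX, ← RingHom.map_adjugate]
  exact hX

end Matrix

noncomputable def Fin.cornersSumEquiv (n : ℕ) : Fin 2 ⊕ Fin n ≃ Fin (n + 2) :=
  Equiv.ofBijective (Sum.elim ![0, Fin.last (n + 1)] (Fin.succ ∘ Fin.castSucc)) <| by
    refine (Fintype.bijective_iff_injective_and_card _).2 ⟨.sumElim ?_ ?_ ?_, by simp [add_comm]⟩
    · intro i j
      fin_cases i <;> fin_cases j <;> simp [Fin.ext_iff]
    · exact (Fin.succ_injective _).comp (Fin.castSucc_injective _)
    · intro i j
      fin_cases i <;> simp [Fin.ext_iff]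
      omega

namespace Matrix

variable {R : Type*} [CommRing R]

/-- The Desnanot–Jacobi identity. -/
theorem det_mul_det_submatrix_succ_castSucc {n : ℕ} (M : Matrix (Fin (n + 2)) (Fin (n + 2)) R) :
    M.det * (M.submatrix (Fin.succ ∘ Fin.castSucc) (Fin.succ ∘ Fin.castSucc)).det =
      (M.submatrix Fin.castSucc Fin.castSucc).det * (M.submatrix Fin.succ Fin.succ).det -
        (M.submatrix Fin.castSucc Fin.succ).det * (M.submatrix Fin.succ Fin.castSucc).det := by
  set e := Fin.cornersSumEquiv n
  set s : R := (-1) ^ (n + 1)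
  have hcorners : (M.adjugate.submatrix e e).toBlocks₁₁ =
      !![(M.submatrix Fin.succ Fin.succ).det, s * (M.submatrix Fin.castSucc Fin.succ).det;
        s * (M.submatrix Fin.succ Fin.castSucc).det, (M.submatrix Fin.castSucc Fin.castSucc).det] := by
    ext i j
    fin_cases i <;> fin_cases j <;>
      simp [e, s, Fin.cornersSumEquiv, toBlocks₁₁, adjugate_fin_succ_eq_det_submatrix]
  have hmiddle : (M.submatrix e e).toBlocks₂₂ =
      M.submatrix (Fin.succ ∘ Fin.castSucc) (Fin.succ ∘ Fin.castSucc) := rfl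
  have hsign : s ^ 2 = 1 := by rw [← pow_mul, pow_mul', neg_one_sq, one_pow]
  have h := det_toBlocks₁₁_adjugate (M.submatrix e e)
  rw [adjugate_submatrix_equiv_self, det_submatrix_equiv_self, hcorners, hmiddle, det_fin_two_of,
    Fintype.card_fin, pow_one] at h
  linear_combination -h -
    (M.submatrix Fin.castSucc Fin.succ).det * (M.submatrix Fin.succ Fin.castSucc).det * hsign

end Matrix

/-- The 2×2 bordered-determinant rule:
`det M · det D = det A' · det D' − det B' · det C'`, where
`M = [[a, bᵀ, e], [c, D, f], [g, hᵀ, l]]`, `A' = [[a, bᵀ],[c, D]]`,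
`B' = [[bᵀ, e],[D, f]]`, `C' = [[c, D],[g, hᵀ]]`, `D' = [[D, f],[hᵀ, l]]`. -/
theorem bordered_det_rule {K : Type*} [Field K] {k : ℕ}
    (a e g l : K) (b c f h : Fin k → K) (D : Matrix (Fin k) (Fin k) K) :
    (Matrix.of (fun i j : Fin (k + 2) =>
      if hi0 : (i : ℕ) = 0 then
        if hj0 : (j : ℕ) = 0 then a
        else if hjl : (j : ℕ) = k + 1 then e
        else b ⟨(j : ℕ) - 1, by have := j.isLt; omega⟩
      else if hil : (i : ℕ) = k + 1 then
        if hj0 : (j : ℕ) = 0 then g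
        else if hjl : (j : ℕ) = k + 1 then l
        else h ⟨(j : ℕ) - 1, by have := j.isLt; omega⟩
      else
        if hj0 : (j : ℕ) = 0 then c ⟨(i : ℕ) - 1, by have := i.isLt; omega⟩
        else if hjl : (j : ℕ) = k + 1 then f ⟨(i : ℕ) - 1, by have := i.isLt; omega⟩
        else D ⟨(i : ℕ) - 1, by have := i.isLt; omega⟩
               ⟨(j : ℕ) - 1, by have := j.isLt; omega⟩)).det * D.det =
    -- A' = [[a, bᵀ],[c, D]]
    (Matrix.of (fun i j : Fin (k + 1) =>
      if hi0 : (i : ℕ) = 0 then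
        if hj0 : (j : ℕ) = 0 then a else b ⟨(j : ℕ) - 1, by have := j.isLt; omega⟩
      else
        if hj0 : (j : ℕ) = 0 then c ⟨(i : ℕ) - 1, by have := i.isLt; omega⟩
        else D ⟨(i : ℕ) - 1, by have := i.isLt; omega⟩
               ⟨(j : ℕ) - 1, by have := j.isLt; omega⟩)).det *
    -- D' = [[D, f],[hᵀ, l]]
    (Matrix.of (fun i j : Fin (k + 1) =>
      if hil : (i : ℕ) = k then
        if hjl : (j : ℕ) = k then l else h ⟨(j : ℕ), by have := j.isLt; omega⟩
      else
        if hjl : (j : ℕ) = k then f ⟨(i : ℕ), by have := i.isLt; omega⟩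
        else D ⟨(i : ℕ), by have := i.isLt; omega⟩
               ⟨(j : ℕ), by have := j.isLt; omega⟩)).det -
    -- B' = [[bᵀ, e],[D, f]]
    (Matrix.of (fun i j : Fin (k + 1) =>
      if hi0 : (i : ℕ) = 0 then
        if hjl : (j : ℕ) = k then e else b ⟨(j : ℕ), by have := j.isLt; omega⟩
      else
        if hjl : (j : ℕ) = k then f ⟨(i : ℕ) - 1, by have := i.isLt; omega⟩
        else D ⟨(i : ℕ) - 1, by have := i.isLt; omega⟩
               ⟨(j : ℕ), by have := j.isLt; omega⟩)).det *
    -- C' = [[c, D],[g, hᵀ]]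
    (Matrix.of (fun i j : Fin (k + 1) =>
      if hil : (i : ℕ) = k then
        if hj0 : (j : ℕ) = 0 then g else h ⟨(j : ℕ) - 1, by have := j.isLt; omega⟩
      else
        if hj0 : (j : ℕ) = 0 then c ⟨(i : ℕ), by have := i.isLt; omega⟩
        else D ⟨(i : ℕ), by have := i.isLt; omega⟩
               ⟨(j : ℕ) - 1, by have := j.isLt; omega⟩)).det := by
  convert Matrix.det_mul_det_submatrix_succ_castSucc _ using 4 <;> ext i j <;>
    simp only [Matrix.submatrix_apply, Matrix.of_apply, Function.comp_apply, Fin.val_succ,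
      Fin.val_castSucc] <;>
    split_ifs <;> first | rfl | omega | contradiction
end

section
/- In the Gasca–Lopez-Carmona–Ramirez generalization, if card(⋃_{k=1}^q J_k) < t+q, then det(B) = 0, where B is the q×q matrix with entries b_{ik} = M[1,...,t,t+i; J_k]. -/
/-!
The columns `⋃ J k` number fewer than `t + q`, so the rows of `M` restricted to them satisfy a
nontrivial linear relation `g`. Expanding along the last row, the minor `M[1..t, j; J k]` is linear
in row `j`, so `g` passes to these minors; those with `j ≤ t` vanish (repeated row), leaving a
relation among the rows of `B` with the last `q` coefficients of `g`. If these coefficients all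
vanish, `g` is a relation among the first `t` rows, which kills every minor, so `B = 0`.
-/

open Matrix Finset

section

variable {K m n : Type*} [Field K]

theorem Matrix.exists_ne_zero_vecMul_eq_zero_on_of_card_lt [Fintype m] (M : Matrix m n K)
    (U : Finset n) (hU : #U < Fintype.card m) : ∃ g ≠ 0, ∀ u ∈ U, (g ᵥ* M) u = 0 := by
  have hdep : ¬ LinearIndependent K (fun j (u : U) => M j u) := fun h => by
    have := h.fintype_card_le_finrank
    simp only [Module.finrank_fintype_fun_eq_card, Fintype.card_coe] at this
    omega
  obtain ⟨g, hg, j, hj⟩ := Fintype.not_linearIndependent_iff.mp hdep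
  refine ⟨g, fun h => hj (congrFun h j), fun u hu => ?_⟩
  simpa [vecMul, dotProduct, Finset.sum_apply] using congrFun hg ⟨u, hu⟩

variable {t : ℕ} (M : Matrix m n K) (top : Fin t → m) (cols : Fin (t + 1) → n)

theorem Matrix.det_submatrix_snoc_eq_sum (j : m) :
    (M.submatrix (Fin.snoc top j) cols).det =
      ∑ l, M j (cols l) * ((-1) ^ (t + l : ℕ) * (M.submatrix top (cols ∘ l.succAbove)).det) := by
  rw [det_succ_row _ (Fin.last t)]
  refine sum_congr rfl fun l _ => ?_
  simp only [Fin.val_last, submatrix_apply, Fin.snoc_last, Fin.succAbove_last]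
  have htop : (Fin.snoc top j : Fin (t + 1) → m) ∘ Fin.castSucc = top :=
    funext fun r => Fin.snoc_castSucc ..
  rw [submatrix_submatrix, htop]
  ring

theorem Matrix.sum_mul_det_submatrix_snoc_eq_zero [Fintype m] (g : m → K)
    (hg : ∀ l, (g ᵥ* M) (cols l) = 0) :
    ∑ j, g j * (M.submatrix (Fin.snoc top j) cols).det = 0 := by
  simp_rw [det_submatrix_snoc_eq_sum, mul_sum, ← mul_assoc]
  rw [sum_comm]
  refine sum_eq_zero fun l _ => ?_
  have hl : ∑ j, g j * M j (cols l) = 0 := hg l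
  rw [← sum_mul, ← sum_mul, hl, zero_mul, zero_mul]

theorem Matrix.det_submatrix_snoc_apply_eq_zero (r : Fin t) :
    (M.submatrix (Fin.snoc top (top r)) cols).det = 0 :=
  det_zero_of_row_eq (Fin.castSucc_lt_last r).ne (by ext; simp)

theorem Matrix.det_submatrix_snoc_eq_zero [Fintype m] (g : Fin t → K) (hg : g ≠ 0)
    (hdep : ∀ l, ∑ r, g r * M (top r) (cols l) = 0) (j : m) :
    (M.submatrix (Fin.snoc top j) cols).det = 0 := by
  rw [← exists_vecMul_eq_zero_iff]
  refine ⟨Fin.snoc g 0, fun h => hg (funext fun r => by simpa using congrFun h r.castSucc), ?_⟩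
  ext l
  simpa [vecMul, dotProduct, Fin.sum_univ_castSucc] using hdep l

end

/-- Gasca–Lopez-Carmona–Ramirez generalization: if `card(⋃ J_k) < t + q`
then `det B = 0`, where `b_{ik} = M[1,…,t,t+i ; J_k]`. -/
theorem glr_vanishing {K : Type*} [Field K] {t q : ℕ} (hq : 0 < q)
    (M : Matrix (Fin (t + q)) (Fin (t + q)) K)
    (J : Fin q → Fin (t + 1) → Fin (t + q))
    (hcard : ((Finset.univ : Finset (Fin q)).biUnion
        (fun k => Finset.univ.image (J k))).card < t + q) :
    (Matrix.of (fun i k : Fin q =>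
      (M.submatrix
        (Fin.snoc (Fin.castLE (by omega)) (⟨t + i, by have := i.isLt; omega⟩ : Fin (t + q)))
        (J k)).det)).det = 0 := by
  classical
  obtain ⟨g, hg, hU⟩ := M.exists_ne_zero_vecMul_eq_zero_on_of_card_lt _ (by simpa using hcard)
  have hcols (k : Fin q) (l : Fin (t + 1)) : (g ᵥ* M) (J k l) = 0 :=
    hU _ (mem_biUnion.mpr ⟨k, mem_univ k, mem_image_of_mem _ (mem_univ l)⟩)
  by_cases hbot : (fun i : Fin q => g (Fin.natAdd t i)) = 0
  · have htop : (fun r : Fin t => g (Fin.castAdd q r)) ≠ 0 := fun htop =>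
      hg (funext fun j => Fin.addCases (congrFun htop) (congrFun hbot) j)
    have hB : Matrix.of (fun i k : Fin q => (M.submatrix
        (Fin.snoc (Fin.castLE (by omega)) (⟨t + i, by have := i.isLt; omega⟩ : Fin (t + q)))
        (J k)).det) = 0 := by
      ext i k
      refine det_submatrix_snoc_eq_zero M (Fin.castAdd q) (J k) _ htop (fun l => ?_) _
      simpa [vecMul, dotProduct, Fin.sum_univ_add, congrFun hbot] using hcols k l
    have : NeZero q := ⟨hq.ne'⟩
    rw [hB, det_zero]
  · rw [← exists_vecMul_eq_zero_iff]
    refine ⟨_, hbot, funext fun k => ?_⟩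
    have := sum_mul_det_submatrix_snoc_eq_zero M (Fin.castAdd q) (J k) g (hcols k)
    rw [Fin.sum_univ_add] at this
    simp only [det_submatrix_snoc_apply_eq_zero, mul_zero, sum_const_zero, zero_add] at this
    exact this
end

section
/- Corollary (Beckermann–Gasca–Mühlbach): if card(J^{(q)}) < q, where J^{(q)} = ⋃_{j=1}^q J_j, then for all choices of row vectors z_1,...,z_q ∈ K^m, det(B) = 0, where B is the q×q matrix with entries b_{ij} equal to the determinant of the submatrix of M with rows I_i and columns J_i, bordered below by the restriction of z_j to the columns J_i. -/
/-- det of a product through a narrow middle type is zero. -/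
lemma bgm_det_mul_eq_zero {K : Type*} [Field K] {q : ℕ} {S : Type*} [Fintype S]
    [DecidableEq S] (hc : Fintype.card S < q)
    (A : Matrix (Fin q) S K) (C : Matrix S (Fin q) K) : (A * C).det = 0 := by
  by_contra h
  have hu : IsUnit (A * C) :=
    (Matrix.isUnit_iff_isUnit_det _).mpr (isUnit_iff_ne_zero.mpr h)
  have h1 := Matrix.rank_of_isUnit _ hu
  have h2 := Matrix.rank_mul_le_left A C
  have h3 := Matrix.rank_le_card_width A
  simp [Fintype.card_fin] at h1
  omega

/-- det as a linear map in the row `r`. -/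
noncomputable def bgm_detRow {K : Type*} [Field K] {p : ℕ}
    (N : Matrix (Fin p) (Fin p) K) (r : Fin p) : (Fin p → K) →ₗ[K] K where
  toFun v := (N.updateRow r v).det
  map_add' u v := by rw [← Matrix.det_updateRow_add]
  map_smul' a v := by simp only [RingHom.id_apply, smul_eq_mul]; rw [← Matrix.det_updateRow_smul]

/-- Beckermann–Gasca–Mühlbach corollary: if `card(J^{(q)}) < q` then for all
row vectors `z₁,…,z_q`, `det B = 0`, where `b_{ij}` is the determinant of
`M(I_i; J_i)` bordered below by the restriction of `z_j` to the columns `J_i`. -/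
theorem bgm_vanishing {K : Type*} [Field K] {n m q : ℕ} (hq : 0 < q)
    (M : Matrix (Fin n) (Fin m) K)
    (α : Fin q → ℕ)
    (I : (k : Fin q) → Fin (α k) → Fin n)
    (J : (k : Fin q) → Fin (α k + 1) → Fin m)
    (hI : ∀ k, StrictMono (I k)) (hJ : ∀ k, StrictMono (J k))
    (hcard : ((Finset.univ : Finset (Fin q)).biUnion
        (fun k => Finset.univ.image (J k))).card < q)
    (z : Fin q → Fin m → K) :
    (Matrix.of (fun i j : Fin q =>
      (Matrix.of (fun r c : Fin (α i + 1) =>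
        Fin.lastCases (motive := fun _ => K) (z j (J i c)) (fun r' => M (I i r') (J i c)) r)).det)).det = 0 := by
  classical
  set T : Finset (Fin m) := (Finset.univ : Finset (Fin q)).biUnion
      (fun k => Finset.univ.image (J k)) with hT
  -- base matrices (independent of z): bordered with last row = basis vector
  set N : (i : Fin q) → Matrix (Fin (α i + 1)) (Fin (α i + 1)) K := fun i =>
    Matrix.of (fun r c : Fin (α i + 1) =>
      Fin.lastCases (motive := fun _ => K) 0 (fun r' => M (I i r') (J i c)) r) with hN
  set D : (i : Fin q) → Fin (α i + 1) → K := fun i c =>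
    ((N i).updateRow (Fin.last (α i)) (Pi.single c 1)).det with hD
  -- expansion of each entry
  have key : ∀ i j : Fin q,
      (Matrix.of (fun r c : Fin (α i + 1) =>
        Fin.lastCases (motive := fun _ => K) (z j (J i c)) (fun r' => M (I i r') (J i c)) r)).det
      = ∑ c : Fin (α i + 1), z j (J i c) * D i c := by
    intro i j
    have hrow : (Matrix.of (fun r c : Fin (α i + 1) =>
        Fin.lastCases (motive := fun _ => K) (z j (J i c)) (fun r' => M (I i r') (J i c)) r))
        = (N i).updateRow (Fin.last (α i)) (fun c => z j (J i c)) := by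
      ext r c
      refine Fin.lastCases ?_ (fun r' => ?_) r
      · simp [Matrix.updateRow_self]
      · rw [Matrix.updateRow_ne (Fin.castSucc_lt_last r').ne]
        simp [hN]
    rw [hrow]
    have hv : (fun c => z j (J i c)) = ∑ c : Fin (α i + 1), z j (J i c) • (Pi.single c 1 : Fin (α i + 1) → K) := by
      ext c; simp [Finset.sum_apply, Pi.single_apply]
    calc ((N i).updateRow (Fin.last (α i)) (fun c => z j (J i c))).det
        = bgm_detRow (N i) (Fin.last (α i)) (∑ c : Fin (α i + 1), z j (J i c) • (Pi.single c 1 : Fin (α i + 1) → K)) := by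
          rw [← hv]; rfl
      _ = ∑ c : Fin (α i + 1), z j (J i c) * D i c := by
          rw [map_sum]
          refine Finset.sum_congr rfl fun c _ => ?_
          rw [map_smul]; rfl
  -- rewrite as a product through T
  set A : Matrix (Fin q) {x // x ∈ T} K := fun i s =>
    ∑ c ∈ Finset.univ.filter (fun c => J i c = (s : Fin m)), D i c with hA
  set C : Matrix {x // x ∈ T} (Fin q) K := fun s j => z j (s : Fin m) with hC
  have hBAC : (Matrix.of (fun i j : Fin q =>
      (Matrix.of (fun r c : Fin (α i + 1) =>
        Fin.lastCases (motive := fun _ => K) (z j (J i c)) (fun r' => M (I i r') (J i c)) r)).det))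
      = A * C := by
    ext i j
    rw [Matrix.of_apply, key i j, Matrix.mul_apply]
    have hmap : ∀ c : Fin (α i + 1), c ∈ Finset.univ → J i c ∈ T := by
      intro c _
      exact Finset.mem_biUnion.mpr ⟨i, Finset.mem_univ i,
        Finset.mem_image.mpr ⟨c, Finset.mem_univ c, rfl⟩⟩
    rw [← Finset.sum_fiberwise_of_maps_to hmap (fun c => z j (J i c) * D i c)]
    rw [← Finset.sum_attach T (fun s => ∑ c ∈ Finset.univ.filter (fun c => J i c = s),
      z j (J i c) * D i c)]
    refine Finset.sum_congr rfl fun s _ => ?_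
    rw [hA, hC]
    simp only [Finset.mul_sum, Finset.sum_mul]
    refine Finset.sum_congr rfl fun c hc => ?_
    rw [(Finset.mem_filter.mp hc).2]
    ring
  rw [hBAC]
  exact bgm_det_mul_eq_zero (by simpa using hcard) A C
end

section
/- New generalized Sylvester identity, even case: for k even with 0 ≤ k ≤ q, det(M_k) / (det M_0)^{(s-1)^k} = [Π over odd i from 1 to k-1 of (det B_i)^{(s-1)^{k-1-i}}] / [Π over even j from 0 to k-2 of (det B_j)^{(s-1)^{k-1-j}}]. -/
/-!
Sylvester's identity: bordering the leading block `M_k` by one row and one column of the next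
`s` rows and columns gives minors equal to `det M_k` times the entries of the Schur complement of
`M_k` in `M_{k+1}`, so `det B_k = det M_{k+1} · (det M_k)^(s-1)`. Hence
`det M_{k+1} = det B_k · (det M_k)^(-e)` with `e = s - 1`, which unrolls to
`det M_k = (det M_0)^((-e)^k) · ∏_{i<k} (det B_i)^((-e)^(k-1-i))`. For even `k` the sign of the
exponent `(-e)^(k-1-i)` puts the odd `i` in the numerator and the even `i` in the denominator.
-/

open Finset

namespace Matrix

variable {R : Type*} [CommRing R] {α β : Type*} {p s : ℕ}

theorem det_submatrix_append (M : Matrix α β R) (f : Fin p → α) (r : Fin s → α)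
    (g : Fin p → β) (c : Fin s → β) :
    (M.submatrix (Fin.append f r) (Fin.append g c)).det =
      (fromBlocks (M.submatrix f g) (M.submatrix f c) (M.submatrix r g)
        (M.submatrix r c)).det := by
  rw [← det_submatrix_equiv_self finSumFinEquiv]
  congr 1
  ext (i | i) (j | j) <;> simp

def borderedMinors (M : Matrix α β R) (f : Fin p → α) (r : Fin s → α) (g : Fin p → β)
    (c : Fin s → β) : Matrix (Fin s) (Fin s) R :=
  of fun i j => (M.submatrix (Fin.snoc f (r i)) (Fin.snoc g (c j))).det

theorem borderedMinors_eq_smul_schur (M : Matrix α β R) (f : Fin p → α) (r : Fin s → α)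
    (g : Fin p → β) (c : Fin s → β) [Invertible (M.submatrix f g)] :
    borderedMinors M f r g c = (M.submatrix f g).det •
      (M.submatrix r c - M.submatrix r g * ⅟(M.submatrix f g) * M.submatrix f c) := by
  ext i j
  rw [borderedMinors, of_apply, Fin.snoc_eq_append, Fin.snoc_eq_append, det_submatrix_append,
    det_fromBlocks₁₁, det_unique (n := Fin 1)]
  simp [mul_apply]

theorem det_borderedMinors [NeZero s] (M : Matrix α β R) (f : Fin p → α) (r : Fin s → α)
    (g : Fin p → β) (c : Fin s → β) (hA : IsUnit (M.submatrix f g).det) :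
    (borderedMinors M f r g c).det =
      (M.submatrix (Fin.append f r) (Fin.append g c)).det * (M.submatrix f g).det ^ (s - 1) := by
  let := (M.submatrix f g).invertibleOfIsUnitDet hA
  rw [borderedMinors_eq_smul_schur, det_smul, det_submatrix_append, det_fromBlocks₁₁,
    Fintype.card_fin, ← pow_sub_one_mul (NeZero.ne s)]
  ring

theorem det_borderedMinors_castLE {n m p' : ℕ} [NeZero s] (M : Matrix (Fin n) (Fin m) R)
    (hp : p + s = p') (hn : p' ≤ n) (hm : p' ≤ m)
    (hA : IsUnit (M.submatrix (Fin.castLE (by omega : p ≤ n))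
      (Fin.castLE (by omega : p ≤ m))).det) :
    (borderedMinors M
        (Fin.castLE (by omega : p ≤ n)) (fun i : Fin s => (⟨p + i, by omega⟩ : Fin n))
        (Fin.castLE (by omega : p ≤ m)) (fun j : Fin s => (⟨p + j, by omega⟩ : Fin m))).det =
      (M.submatrix (Fin.castLE hn) (Fin.castLE hm)).det *
        (M.submatrix (Fin.castLE (by omega : p ≤ n))
          (Fin.castLE (by omega : p ≤ m))).det ^ (s - 1) := by
  subst hp
  have append_castLE {N : ℕ} (h : p + s ≤ N) :
      Fin.append (Fin.castLE (by omega : p ≤ N))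
        (fun i : Fin s => (⟨p + i, by omega⟩ : Fin N)) = Fin.castLE h := by
    ext i
    refine Fin.addCases (fun i => ?_) (fun i => ?_) i <;> simp
  rw [det_borderedMinors _ _ _ _ _ hA, append_castLE, append_castLE]

end Matrix

section Recurrence

variable {G : Type*} [DivisionCommMonoid G]

theorem eq_zpow_mul_prod_of_succ_eq_mul_zpow (a b : ℕ → G) (e : ℤ) {q : ℕ}
    (h : ∀ j < q, a (j + 1) = b j * a j ^ e) :
    ∀ k ≤ q, a k = a 0 ^ (e ^ k) * ∏ i ∈ range k, b i ^ (e ^ (k - 1 - i)) := by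
  intro k
  induction k with
  | zero => simp
  | succ k ih =>
    intro hk
    have hprod : (∏ i ∈ range k, b i ^ (e ^ (k - 1 - i))) ^ e =
        ∏ i ∈ range k, b i ^ (e ^ (k + 1 - 1 - i)) := by
      rw [← prod_zpow]
      refine prod_congr rfl fun i hi => ?_
      rw [← zpow_mul, ← pow_succ, Nat.add_sub_cancel]
      congr 2
      have := mem_range.1 hi
      omega
    rw [h k hk, ih (by omega), mul_zpow, hprod, ← zpow_mul, ← pow_succ, prod_range_succ,
      Nat.add_sub_cancel, Nat.sub_self, pow_zero, zpow_one]
    ac_rfl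

theorem prod_range_zpow_neg_pow_of_even (b : ℕ → G) (e : ℕ) {k : ℕ} (hk : Even k) :
    ∏ i ∈ range k, b i ^ ((-(e : ℤ)) ^ (k - 1 - i)) =
      (∏ i ∈ range k with Odd i, b i ^ (e ^ (k - 1 - i))) /
        ∏ j ∈ range (k - 1) with Even j, b j ^ (e ^ (k - 1 - j)) := by
  obtain ⟨l, rfl⟩ := hk
  have hodd : ∏ i ∈ range (l + l) with Odd i, b i ^ ((-(e : ℤ)) ^ (l + l - 1 - i)) =
      ∏ i ∈ range (l + l) with Odd i, b i ^ (e ^ (l + l - 1 - i)) := by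
    refine prod_congr rfl fun i hi => ?_
    obtain ⟨-, j, rfl⟩ := mem_filter.1 hi
    rw [show l + l - 1 - (2 * j + 1) = 2 * (l - 1 - j) by omega, (even_two_mul _).neg_pow,
      ← Nat.cast_pow, zpow_natCast]
  have heven : ∏ i ∈ range (l + l) with ¬Odd i, b i ^ ((-(e : ℤ)) ^ (l + l - 1 - i)) =
      (∏ j ∈ range (l + l - 1) with Even j, b j ^ (e ^ (l + l - 1 - j)))⁻¹ := by
    have hset : {i ∈ range (l + l) | ¬Odd i} = {j ∈ range (l + l - 1) | Even j} := by
      ext i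
      simp only [mem_filter, mem_range, Nat.not_odd_iff_even]
      constructor <;> rintro ⟨h, j, rfl⟩ <;> exact ⟨by omega, j, rfl⟩
    rw [hset, ← prod_inv_distrib]
    refine prod_congr rfl fun i hi => ?_
    obtain ⟨hi, j, rfl⟩ := mem_filter.1 hi
    have hj := mem_range.1 hi
    rw [show l + l - 1 - (j + j) = 2 * (l - 1 - j) + 1 by omega, (odd_two_mul_add_one _).neg_pow,
      zpow_neg, ← Nat.cast_pow, zpow_natCast]
  rw [← prod_filter_mul_prod_filter_not (range (l + l)) Odd, hodd, heven, div_eq_mul_inv]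

end Recurrence

/-- New generalized Sylvester identity, even case.  Here `Mk k` denotes the
determinant of the leading principal submatrix of `M` of order `t + k·s`, and
`B k` the determinant of the `s×s` matrix of bordered minors of orders
`t + k·s + 1` (rows `1,…,t+ks,t+ks+i`, columns `1,…,t+ks,t+ks+j`).  The
relevant determinants appearing in denominators are assumed nonzero. -/
theorem new_sylvester_even {K : Type*} [Field K] {n m t s q : ℕ}
    (M : Matrix (Fin n) (Fin m) K)
    (hs1 : 1 ≤ s)
    (hr : min n m = t + q * s)
    (Mk B : ℕ → K)
    (hMk : ∀ k, k ≤ q → ∀ (h1 : t + k * s ≤ n) (h2 : t + k * s ≤ m),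
      Mk k = (M.submatrix (Fin.castLE h1) (Fin.castLE h2)).det)
    (hB : ∀ k, k < q → ∀ (h1 : t + k * s + s ≤ n) (h2 : t + k * s + s ≤ m),
      B k = (Matrix.of (fun i j : Fin s =>
        (M.submatrix
          (Fin.snoc (Fin.castLE (by omega : t + k * s ≤ n))
            (⟨t + k * s + (i : ℕ), by have := i.isLt; omega⟩ : Fin n))
          (Fin.snoc (Fin.castLE (by omega : t + k * s ≤ m))
            (⟨t + k * s + (j : ℕ), by have := j.isLt; omega⟩ : Fin m))).det)).det)
    (hM0 : Mk 0 ≠ 0) (hBne : ∀ k, k < q → B k ≠ 0)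
    (k : ℕ) (hk : k ≤ q) (hke : Even k) :
    Mk k / (Mk 0) ^ ((s - 1) ^ k) =
      (∏ i ∈ (Finset.range k).filter (fun i => Odd i), (B i) ^ ((s - 1) ^ (k - 1 - i))) /
      (∏ j ∈ (Finset.range (k - 1)).filter (fun j => Even j), (B j) ^ ((s - 1) ^ (k - 1 - j))) := by
  have : NeZero s := ⟨by omega⟩
  have hle : ∀ j ≤ q, t + j * s ≤ n ∧ t + j * s ≤ m := fun j hj => by
    have := Nat.mul_le_mul_right s hj
    omega
  have hstep : ∀ j < q, Mk j ≠ 0 → B j = Mk (j + 1) * Mk j ^ (s - 1) := by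
    intro j hj h0
    obtain ⟨h1, h2⟩ := hle (j + 1) hj
    have hsucc : t + (j + 1) * s = t + j * s + s := by ring
    rw [hMk j hj.le (by omega) (by omega)] at h0 ⊢
    rw [hMk (j + 1) hj h1 h2]
    exact (hB j hj (by omega) (by omega)).trans
      (Matrix.det_borderedMinors_castLE M (by ring) h1 h2 (isUnit_iff_ne_zero.2 h0))
  have hne : ∀ j ≤ q, Mk j ≠ 0 := by
    intro j
    induction j with
    | zero => exact fun _ => hM0
    | succ j ih =>
      intro hj h0
      apply hBne j hj
      rw [hstep j hj (ih (by omega)), h0, zero_mul]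
  have hrec : ∀ j < q, Mk (j + 1) = B j * Mk j ^ (-((s - 1 : ℕ) : ℤ)) := fun j hj => by
    rw [hstep j hj (hne j hj.le), zpow_neg, zpow_natCast,
      mul_inv_cancel_right₀ (pow_ne_zero _ (hne j hj.le))]
  rw [eq_zpow_mul_prod_of_succ_eq_mul_zpow Mk B _ hrec k hk,
    prod_range_zpow_neg_pow_of_even B _ hke, hke.neg_pow, ← Nat.cast_pow, zpow_natCast,
    mul_div_cancel_left₀ _ (pow_ne_zero _ hM0)]
end

section
/- Inductive step of the new generalization: for 0 ≤ k < q, det(M_{k+1}) · (det M_k)^{s-1} = det(B_k), where B_k is the s×s matrix of bordered minors of the leading principal submatrix of order m_k = t + k·s. -/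
set_option linter.unreachableTactic false
set_option linter.unusedTactic false
set_option linter.unusedVariables false

open Matrix

lemma key_unit {F : Type*} [Field F] {r s : ℕ} (hs : 1 ≤ s)
    (A : Matrix (Fin r) (Fin r) F) (B : Matrix (Fin r) (Fin s) F)
    (C : Matrix (Fin s) (Fin r) F) (D : Matrix (Fin s) (Fin s) F)
    (hA : IsUnit A.det) :
    (Matrix.fromBlocks A B C D).det * A.det ^ (s - 1) =
    (Matrix.of fun i j : Fin s =>
      (Matrix.fromBlocks A (Matrix.of fun a (_ : Fin 1) => B a j)
        (Matrix.of fun (_ : Fin 1) b => C i b)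
        (Matrix.of fun (_ : Fin 1) (_ : Fin 1) => D i j)).det).det := by
  haveI : Invertible A := A.invertibleOfIsUnitDet hA
  have hB : (Matrix.of fun i j : Fin s =>
      (Matrix.fromBlocks A (Matrix.of fun a (_ : Fin 1) => B a j)
        (Matrix.of fun (_ : Fin 1) b => C i b)
        (Matrix.of fun (_ : Fin 1) (_ : Fin 1) => D i j)).det)
      = A.det • (D - C * ⅟A * B) := by
    ext i j
    rw [Matrix.of_apply, det_fromBlocks₁₁]
    simp only [Matrix.smul_apply, Matrix.sub_apply, smul_eq_mul]
    congr 1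
    rw [det_fin_one]
    simp only [Matrix.sub_apply, Matrix.of_apply, Matrix.mul_apply, Matrix.of_apply,
      Finset.sum_mul]
  rw [hB, det_smul, Fintype.card_fin, det_fromBlocks₁₁]
  ring_nf
  rw [← pow_succ', Nat.sub_add_cancel hs, mul_comm]

lemma push_det {R S : Type*} [CommRing R] [CommRing S] (f : R →+* S) {r s : ℕ}
    (A : Matrix (Fin r) (Fin r) R) (B : Matrix (Fin r) (Fin s) R)
    (C : Matrix (Fin s) (Fin r) R) (D : Matrix (Fin s) (Fin s) R) :
    f ((Matrix.fromBlocks A B C D).det * A.det ^ (s - 1)) =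
      (Matrix.fromBlocks (A.map f) (B.map f) (C.map f) (D.map f)).det
        * (A.map f).det ^ (s - 1) := by
  rw [_root_.map_mul, _root_.map_pow, RingHom.map_det, RingHom.map_det,
    RingHom.mapMatrix_apply, RingHom.mapMatrix_apply, Matrix.fromBlocks_map]

lemma push_det' {R S : Type*} [CommRing R] [CommRing S] (f : R →+* S) {r s : ℕ}
    (A : Matrix (Fin r) (Fin r) R) (B : Matrix (Fin r) (Fin s) R)
    (C : Matrix (Fin s) (Fin r) R) (D : Matrix (Fin s) (Fin s) R) :
    f ((Matrix.of fun i j : Fin s =>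
      (Matrix.fromBlocks A (Matrix.of fun a (_ : Fin 1) => B a j)
        (Matrix.of fun (_ : Fin 1) b => C i b)
        (Matrix.of fun (_ : Fin 1) (_ : Fin 1) => D i j)).det).det) =
    (Matrix.of fun i j : Fin s =>
      (Matrix.fromBlocks (A.map f) (Matrix.of fun a (_ : Fin 1) => (B.map f) a j)
        (Matrix.of fun (_ : Fin 1) b => (C.map f) i b)
        (Matrix.of fun (_ : Fin 1) (_ : Fin 1) => (D.map f) i j)).det).det := by
  rw [RingHom.map_det, RingHom.mapMatrix_apply]
  congr 1
  ext i j
  rw [Matrix.map_apply, Matrix.of_apply, Matrix.of_apply, RingHom.map_det,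
    RingHom.mapMatrix_apply, Matrix.fromBlocks_map]
  congr 1 <;> ext a b <;> simp [Matrix.map_apply]

lemma key {F : Type*} [Field F] {r s : ℕ} (hs : 1 ≤ s)
    (A : Matrix (Fin r) (Fin r) F) (B : Matrix (Fin r) (Fin s) F)
    (C : Matrix (Fin s) (Fin r) F) (D : Matrix (Fin s) (Fin s) F) :
    (Matrix.fromBlocks A B C D).det * A.det ^ (s - 1) =
    (Matrix.of fun i j : Fin s =>
      (Matrix.fromBlocks A (Matrix.of fun a (_ : Fin 1) => B a j)
        (Matrix.of fun (_ : Fin 1) b => C i b)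
        (Matrix.of fun (_ : Fin 1) (_ : Fin 1) => D i j)).det).det := by
  -- work over F[X], perturbing A to X • 1 + A
  set φ : Polynomial F →+* RatFunc F := (algebraMap (Polynomial F) (RatFunc F) : _)
  have hφ : Function.Injective φ := IsFractionRing.injective (Polynomial F) (RatFunc F)
  set AX : Matrix (Fin r) (Fin r) (Polynomial F) :=
    (Polynomial.X : Polynomial F) • 1 + A.map Polynomial.C with hAX
  set BX := B.map Polynomial.C
  set CX := C.map Polynomial.C
  set DX := D.map Polynomial.C
  have hAXch : AX = Matrix.charmatrix (-A) := by
    ext i j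
    by_cases h : i = j
    · subst h
      simp [hAX, Matrix.charmatrix_apply_eq, Matrix.one_apply, sub_eq_add_neg]
    · simp [hAX, Matrix.charmatrix_apply_ne _ _ _ h, Matrix.one_apply, h, sub_eq_add_neg]
  have hdet : IsUnit ((AX.map φ).det) := by
    rw [← RingHom.mapMatrix_apply, ← RingHom.map_det, isUnit_iff_ne_zero, ne_eq,
      map_eq_zero_iff φ hφ, hAXch]
    exact (Matrix.charpoly_monic (-A)).ne_zero
  have hpoly := key_unit (F := RatFunc F) hs (AX.map φ) (BX.map φ) (CX.map φ) (DX.map φ) hdet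
  have hid : (Matrix.fromBlocks AX BX CX DX).det * AX.det ^ (s - 1) =
      (Matrix.of fun i j : Fin s =>
        (Matrix.fromBlocks AX (Matrix.of fun a (_ : Fin 1) => BX a j)
          (Matrix.of fun (_ : Fin 1) b => CX i b)
          (Matrix.of fun (_ : Fin 1) (_ : Fin 1) => DX i j)).det).det := by
    apply hφ
    rw [push_det, push_det']
    exact hpoly
  have h0 := congrArg (Polynomial.evalRingHom (0 : F)) hid
  rw [push_det, push_det'] at h0
  have hA0 : AX.map (Polynomial.evalRingHom (0 : F)) = A := by
    ext i j
    by_cases h : i = j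
    · subst h; simp [hAX, Matrix.one_apply]
    · simp [hAX, Matrix.one_apply, h]
  have hB0 : BX.map (Polynomial.evalRingHom (0 : F)) = B := by ext i j; simp [BX]
  have hC0 : CX.map (Polynomial.evalRingHom (0 : F)) = C := by ext i j; simp [CX]
  have hD0 : DX.map (Polynomial.evalRingHom (0 : F)) = D := by ext i j; simp [DX]
  rwa [hA0, hB0, hC0, hD0] at h0


/-- Inductive step of the new generalization: for `0 ≤ k < q`,
`det M_{k+1} · (det M_k)^{s-1} = det B_k`, with `m_k = t + k·s`. -/
theorem new_sylvester_step {K : Type*} [Field K] {n m t s q : ℕ}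
    (M : Matrix (Fin n) (Fin m) K)
    (ht : 0 < t) (hs : 1 ≤ s) (hr : min n m = t + q * s)
    (k : ℕ) (hk : k < q) :
    (M.submatrix
        (Fin.castLE (show t + k * s + s ≤ n by
          have h3 : (k + 1) * s ≤ q * s := Nat.mul_le_mul (Nat.succ_le_of_lt hk) (le_refl s)
          have h4 : (k + 1) * s = k * s + s := Nat.succ_mul k s
          have h5 : min n m ≤ n := min_le_left n m
          linarith))
        (Fin.castLE (show t + k * s + s ≤ m by
          have h3 : (k + 1) * s ≤ q * s := Nat.mul_le_mul (Nat.succ_le_of_lt hk) (le_refl s)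
          have h4 : (k + 1) * s = k * s + s := Nat.succ_mul k s
          have h5 : min n m ≤ m := min_le_right n m
          linarith))).det *
      ((M.submatrix
        (Fin.castLE (show t + k * s ≤ n by
          have h3 : (k + 1) * s ≤ q * s := Nat.mul_le_mul (Nat.succ_le_of_lt hk) (le_refl s)
          have h4 : (k + 1) * s = k * s + s := Nat.succ_mul k s
          have h5 : min n m ≤ n := min_le_left n m
          linarith))
        (Fin.castLE (show t + k * s ≤ m by
          have h3 : (k + 1) * s ≤ q * s := Nat.mul_le_mul (Nat.succ_le_of_lt hk) (le_refl s)
          have h4 : (k + 1) * s = k * s + s := Nat.succ_mul k s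
          have h5 : min n m ≤ m := min_le_right n m
          linarith))).det) ^ (s - 1) =
    (Matrix.of (fun i j : Fin s =>
      (M.submatrix
        (Fin.snoc (Fin.castLE (show t + k * s ≤ n by
            have h3 : (k + 1) * s ≤ q * s := Nat.mul_le_mul (Nat.succ_le_of_lt hk) (le_refl s)
            have h4 : (k + 1) * s = k * s + s := Nat.succ_mul k s
            have h5 : min n m ≤ n := min_le_left n m
            linarith))
          (⟨t + k * s + (i : ℕ), by
            have h3 : (k + 1) * s ≤ q * s := Nat.mul_le_mul (Nat.succ_le_of_lt hk) (le_refl s)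
            have h4 : (k + 1) * s = k * s + s := Nat.succ_mul k s
            have h5 : min n m ≤ n := min_le_left n m
            have h6 := i.isLt
            linarith⟩ : Fin n))
        (Fin.snoc (Fin.castLE (show t + k * s ≤ m by
            have h3 : (k + 1) * s ≤ q * s := Nat.mul_le_mul (Nat.succ_le_of_lt hk) (le_refl s)
            have h4 : (k + 1) * s = k * s + s := Nat.succ_mul k s
            have h5 : min n m ≤ m := min_le_right n m
            linarith))
          (⟨t + k * s + (j : ℕ), by
            have h3 : (k + 1) * s ≤ q * s := Nat.mul_le_mul (Nat.succ_le_of_lt hk) (le_refl s)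
            have h4 : (k + 1) * s = k * s + s := Nat.succ_mul k s
            have h5 : min n m ≤ m := min_le_right n m
            have h6 := j.isLt
            linarith⟩ : Fin m))).det)).det := by
  have h3 : (k + 1) * s ≤ q * s := Nat.mul_le_mul (Nat.succ_le_of_lt hk) (le_refl s)
  have h4 : (k + 1) * s = k * s + s := Nat.succ_mul k s
  have hn5 : min n m ≤ n := min_le_left n m
  have hm5 : min n m ≤ m := min_le_right n m
  have hn : t + k * s + s ≤ n := by linarith
  have hm : t + k * s + s ≤ m := by linarith
  have hn' : t + k * s ≤ n := by linarith
  have hm' : t + k * s ≤ m := by linarith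
  set r := t + k * s with hrdef
  set A : Matrix (Fin r) (Fin r) K := M.submatrix (Fin.castLE hn') (Fin.castLE hm') with hA
  set B : Matrix (Fin r) (Fin s) K :=
    Matrix.of (fun a j => M (Fin.castLE hn' a) ⟨r + (j : ℕ), by omega⟩) with hB
  set C : Matrix (Fin s) (Fin r) K :=
    Matrix.of (fun i b => M ⟨r + (i : ℕ), by omega⟩ (Fin.castLE hm' b)) with hC
  set D : Matrix (Fin s) (Fin s) K :=
    Matrix.of (fun i j => M ⟨r + (i : ℕ), by omega⟩ ⟨r + (j : ℕ), by omega⟩) with hD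
  have e1 : M.submatrix (Fin.castLE hn) (Fin.castLE hm) =
      (Matrix.fromBlocks A B C D).submatrix finSumFinEquiv.symm finSumFinEquiv.symm := by
    ext i j
    simp only [Matrix.submatrix_apply]
    refine Fin.addCases (fun a => ?_) (fun a => ?_) i <;>
      refine Fin.addCases (fun b => ?_) (fun b => ?_) j <;>
      simp only [finSumFinEquiv_symm_apply_castAdd, finSumFinEquiv_symm_apply_natAdd,
        Matrix.fromBlocks_apply₁₁, Matrix.fromBlocks_apply₁₂, Matrix.fromBlocks_apply₂₁,
        Matrix.fromBlocks_apply₂₂, hA, hB, hC, hD, Matrix.of_apply, Matrix.submatrix_apply] <;>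
      congr 1 <;> apply Fin.ext <;> simp
  have e2 : ∀ (i j : Fin s),
      M.submatrix (Fin.snoc (Fin.castLE hn') (⟨r + (i : ℕ), by omega⟩ : Fin n))
        (Fin.snoc (Fin.castLE hm') (⟨r + (j : ℕ), by omega⟩ : Fin m)) =
      (Matrix.fromBlocks A (Matrix.of fun a (_ : Fin 1) => B a j)
        (Matrix.of fun (_ : Fin 1) b => C i b)
        (Matrix.of fun (_ : Fin 1) (_ : Fin 1) => D i j)).submatrix
        finSumFinEquiv.symm finSumFinEquiv.symm := by
    intro i j
    have hnat : ∀ (x : Fin 1), (Fin.natAdd r x : Fin (r+1)) = Fin.last r := by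
      intro x
      apply Fin.ext
      simp [Fin.last]
    have hsymm1 : ∀ x : Fin r, finSumFinEquiv.symm (Fin.castSucc x) = Sum.inl x :=
      fun x => finSumFinEquiv_symm_apply_castAdd x
    have hsymm2 : finSumFinEquiv.symm (Fin.last r) = Sum.inr (0 : Fin 1) := by
      rw [← hnat 0]; exact finSumFinEquiv_symm_apply_natAdd 0
    ext a b
    simp only [Matrix.submatrix_apply]
    refine Fin.addCases (fun a' => ?_) (fun a' => ?_) a <;>
      refine Fin.addCases (fun b' => ?_) (fun b' => ?_) b <;>
      simp only [hnat, show ∀ (x : Fin r), Fin.castAdd 1 x = Fin.castSucc x from fun _ => rfl,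
        Fin.snoc_castSucc, Fin.snoc_last,
        hsymm1, hsymm2,
        Matrix.fromBlocks_apply₁₁, Matrix.fromBlocks_apply₁₂, Matrix.fromBlocks_apply₂₁,
        Matrix.fromBlocks_apply₂₂, hA, hB, hC, hD, Matrix.of_apply, Matrix.submatrix_apply]
  calc (M.submatrix (Fin.castLE hn) (Fin.castLE hm)).det * A.det ^ (s - 1)
      = (Matrix.fromBlocks A B C D).det * A.det ^ (s - 1) := by
        rw [e1, Matrix.det_submatrix_equiv_self]
    _ = _ := by
        rw [key hs A B C D]
        congr 1
        ext i j
        rw [Matrix.of_apply, Matrix.of_apply, e2 i j, Matrix.det_submatrix_equiv_self]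
end

section
/- Case s = 2, q = 2 of the new generalization: for an n×n matrix M with leading principal block D of order t = n−4, det(M)/det(D) = det(B_1)/det(B_0), equivalently det(M)·det(B_0) = det(D)·det(B_1), where B_0 and B_1 are 2×2 matrices of bordered minors of orders t+1 and t+3 respectively. -/
/-!
Both sides equal `det D · det C · det M`, where `C` is the leading block of order `t + 2`: this is
Sylvester's identity `det [bordered minors] = (det A)^(q-1) · det N` for `q = 2`, applied once to
`M` with pivot `C` (giving `det B₁`) and once to `C` with pivot `D` (giving `det B₀`).

For Sylvester's identity: if the pivot `A` is invertible, each bordered minor is `det A` times the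
corresponding entry of the Schur complement of `A`, and `det N = det A · det (Schur complement)`.
If `A` is singular, a kernel vector of `A` shows by Cramer's rule that the matrix of bordered
minors has rank at most one.
-/

open Matrix

namespace Matrix

variable {m n α : Type*}

def bordered (N : Matrix (m ⊕ n) (m ⊕ n) α) (i j : n) : Matrix (m ⊕ Fin 1) (m ⊕ Fin 1) α :=
  N.submatrix (Sum.map id fun _ => i) (Sum.map id fun _ => j)

variable [Fintype m] [DecidableEq m]

section CommRing

variable {R : Type*} [CommRing R]

theorem det_bordered_of_invertible (N : Matrix (m ⊕ n) (m ⊕ n) R) [Invertible N.toBlocks₁₁]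
    (i j : n) : (N.bordered i j).det =
      N.toBlocks₁₁.det * (N.toBlocks₂₂ - N.toBlocks₂₁ * ⅟N.toBlocks₁₁ * N.toBlocks₁₂) i j := by
  have hblocks : N.bordered i j = fromBlocks N.toBlocks₁₁ (N.toBlocks₁₂.submatrix id fun _ => j)
      (N.toBlocks₂₁.submatrix (fun _ => i) id) (of fun _ _ => N.toBlocks₂₂ i j) := by
    ext (a | a) (b | b) <;> rfl
  rw [hblocks, det_fromBlocks₁₁, det_fin_one]
  simp [mul_apply, Matrix.mul_assoc]

theorem det_eq_det_toBlocks₁₁_mul_det_schur [Fintype n] [DecidableEq n]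
    (N : Matrix (m ⊕ n) (m ⊕ n) R) [Invertible N.toBlocks₁₁] : N.det =
      N.toBlocks₁₁.det * (N.toBlocks₂₂ - N.toBlocks₂₁ * ⅟N.toBlocks₁₁ * N.toBlocks₁₂).det := by
  conv_lhs => rw [← fromBlocks_toBlocks N]
  exact det_fromBlocks₁₁ _ _ _ _

theorem bordered_mulVec_sum_elim_zero (N : Matrix (m ⊕ n) (m ⊕ n) R) {v : m → R}
    (hv : N.toBlocks₁₁ *ᵥ v = 0) (i j : n) :
    N.bordered i j *ᵥ Sum.elim v 0 = Pi.single (Sum.inr 0) ((N.toBlocks₂₁ *ᵥ v) i) := by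
  ext (a | a)
  · simpa [mulVec, dotProduct, bordered, toBlocks₁₁] using congrFun hv a
  · fin_cases a
    simp [mulVec, dotProduct, bordered, toBlocks₂₁]

theorem adjugate_bordered_inl_inr (N : Matrix (m ⊕ n) (m ⊕ n) R) (i i' j : n) (k : m) :
    (N.bordered i j).adjugate (Sum.inl k) (Sum.inr 0) =
      (N.bordered i' j).adjugate (Sum.inl k) (Sum.inr 0) := by
  simp only [adjugate_apply]
  congr 1
  ext (a | a) b
  · simp [updateRow_ne, bordered]
  · fin_cases a
    simp

/-- Cramer's rule applied to `Sum.elim v 0`; as `i` and `j` vary, the right-hand side is a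
rank-one matrix. -/
theorem det_bordered_mul_eq (N : Matrix (m ⊕ n) (m ⊕ n) R) {v : m → R}
    (hv : N.toBlocks₁₁ *ᵥ v = 0) (i j : n) (k : m) :
    (N.bordered i j).det * v k =
      (N.toBlocks₂₁ *ᵥ v) i * (N.bordered i j).adjugate (Sum.inl k) (Sum.inr 0) := by
  have := congrFun (congrArg ((N.bordered i j).adjugate *ᵥ ·)
    (N.bordered_mulVec_sum_elim_zero hv i j)) (Sum.inl k)
  simp only [mulVec_mulVec, adjugate_mul, smul_mulVec, one_mulVec, mulVec_single] at this
  simpa [mul_comm] using this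

end CommRing

theorem det_of_det_bordered_eq_zero {K : Type*} [Field K] [Fintype n] [DecidableEq n]
    [Nontrivial n] (N : Matrix (m ⊕ n) (m ⊕ n) K) (hN : N.toBlocks₁₁.det = 0) :
    (of fun i j => (N.bordered i j).det).det = 0 := by
  obtain ⟨v, hv0, hv⟩ := exists_mulVec_eq_zero_iff.2 hN
  obtain ⟨k, hk⟩ := Function.ne_iff.1 hv0
  obtain ⟨i₀, -⟩ := exists_pair_ne n
  have hrank : v k • of (fun i j => (N.bordered i j).det) = vecMulVec (N.toBlocks₂₁ *ᵥ v)
      fun j => (N.bordered i₀ j).adjugate (Sum.inl k) (Sum.inr 0) := by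
    ext i j
    rw [smul_apply, of_apply, smul_eq_mul, mul_comm, det_bordered_mul_eq N hv, vecMulVec_apply,
      adjugate_bordered_inl_inr N i i₀]
  have := congrArg det hrank
  rw [det_smul, det_vecMulVec] at this
  exact (mul_eq_zero.1 this).resolve_left (pow_ne_zero _ hk)

/-- Sylvester's determinant identity. -/
theorem det_of_det_bordered {K : Type*} [Field K] [Fintype n] [DecidableEq n] [Nontrivial n]
    (N : Matrix (m ⊕ n) (m ⊕ n) K) :
    (of fun i j => (N.bordered i j).det).det =
      N.toBlocks₁₁.det ^ (Fintype.card n - 1) * N.det := by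
  have hcard : Fintype.card n - 1 ≠ 0 := by have := Fintype.one_lt_card (α := n); omega
  by_cases hN : N.toBlocks₁₁.det = 0
  · rw [det_of_det_bordered_eq_zero N hN, hN, zero_pow hcard, zero_mul]
  · let := invertibleOfIsUnitDet _ (isUnit_iff_ne_zero.2 hN)
    have hschur : of (fun i j => (N.bordered i j).det) = N.toBlocks₁₁.det •
        (N.toBlocks₂₂ - N.toBlocks₂₁ * ⅟N.toBlocks₁₁ * N.toBlocks₁₂) := by
      ext i j
      exact det_bordered_of_invertible N i j
    rw [hschur, det_smul, det_eq_det_toBlocks₁₁_mul_det_schur N, ← mul_assoc, ← pow_succ,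
      Nat.sub_add_cancel Fintype.card_pos]

end Matrix

theorem Fin.snoc_castLE_finSumFinEquiv {k q : ℕ} (i : Fin q) (x : Fin k ⊕ Fin 1) :
    (Fin.snoc (Fin.castLE (Nat.le_add_right k q)) ⟨k + i, by omega⟩ : Fin (k + 1) → Fin (k + q))
      (finSumFinEquiv x) = finSumFinEquiv (Sum.map id (fun _ => i) x) := by
  rcases x with a | a
  · exact Fin.snoc_castSucc (α := fun _ => Fin (k + q)) ..
  · fin_cases a
    exact Fin.snoc_last (α := fun _ => Fin (k + q)) ..

theorem det_of_det_bordered_fin {K : Type*} [Field K] {k q : ℕ} (hq : 2 ≤ q)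
    (N : Matrix (Fin (k + q)) (Fin (k + q)) K) :
    (of fun i j : Fin q =>
      (N.submatrix
        (Fin.snoc (Fin.castLE (Nat.le_add_right k q)) (⟨k + i, by omega⟩ : Fin (k + q)))
        (Fin.snoc (Fin.castLE (Nat.le_add_right k q)) (⟨k + j, by omega⟩ : Fin (k + q)))).det).det =
      (N.submatrix (Fin.castLE (Nat.le_add_right k q)) (Fin.castLE (Nat.le_add_right k q))).det ^
        (q - 1) * N.det := by
  have : Nontrivial (Fin q) := Fin.nontrivial_iff_two_le.2 hq
  have h := det_of_det_bordered (N.submatrix finSumFinEquiv finSumFinEquiv)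
  rw [Fintype.card_fin, det_submatrix_equiv_self] at h
  convert h using 3
  · ext i j
    rw [← det_submatrix_equiv_self finSumFinEquiv]
    congr 1
    ext a b
    simp [bordered, Fin.snoc_castLE_finSumFinEquiv]
  · rfl

/-- Case `s = 2`, `q = 2` of the new generalization: for an `(t+4)×(t+4)`
matrix `M` with leading principal block `D` of order `t`,
`det M · det B₀ = det D · det B₁`. -/
theorem new_sylvester_s2q2 {K : Type*} [Field K] {t : ℕ}
    (M : Matrix (Fin (t + 4)) (Fin (t + 4)) K) :
    M.det *
      (Matrix.of (fun i j : Fin 2 =>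
        (M.submatrix
          (Fin.snoc (Fin.castLE (by omega : t ≤ t + 4))
            (⟨t + (i : ℕ), by have := i.isLt; omega⟩ : Fin (t + 4)))
          (Fin.snoc (Fin.castLE (by omega : t ≤ t + 4))
            (⟨t + (j : ℕ), by have := j.isLt; omega⟩ : Fin (t + 4)))).det)).det =
    (M.submatrix (Fin.castLE (by omega : t ≤ t + 4))
        (Fin.castLE (by omega : t ≤ t + 4))).det *
      (Matrix.of (fun i j : Fin 2 =>
        (M.submatrix
          (Fin.snoc (Fin.castLE (by omega : t + 2 ≤ t + 4))
            (⟨t + 2 + (i : ℕ), by have := i.isLt; omega⟩ : Fin (t + 4)))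
          (Fin.snoc (Fin.castLE (by omega : t + 2 ≤ t + 4))
            (⟨t + 2 + (j : ℕ), by have := j.isLt; omega⟩ : Fin (t + 4)))).det)).det := by
  have hB₁ := det_of_det_bordered_fin (k := t + 2) le_rfl M
  have hB₀ := det_of_det_bordered_fin (k := t) le_rfl
    (M.submatrix (Fin.castLE (by omega : t + 2 ≤ t + 4)) (Fin.castLE (by omega)))
  simp only [submatrix_submatrix, Fin.comp_snoc, Fin.castLE_comp_castLE, Fin.castLE_mk]
    at hB₀
  rw [hB₀, hB₁]
  ring
end

section
/- Sylvester's identity in the case t = n−1: det(M) · (leading principal minor of order n−2) = a_{n-1,n-1}^{(n-2)}·a_{n,n}^{(n-2)} − a_{n-1,n}^{(n-2)}·a_{n,n-1}^{(n-2)}, where a_{i,j}^{(n-2)} denotes the (n−1)×(n−1) minor of M with rows 1,...,n−2,i and columns 1,...,n−2,j. -/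
/-!
Multiplying `P` by the matrix that agrees with `1` on the first block column and with `adj P`
on the second one gives a block lower triangular matrix with diagonal blocks `P₁₁` and
`det P • 1`, because `P * adj P = det P • 1`. Hence `det P * det (adj P)₂₂ = det P₁₁ * det P ^ k`
for a trailing block of size `k`, and cancelling `det P` in the generic matrix over `ℤ` gives
Jacobi's identity `det (adj P)₂₂ = det P₁₁ * det P ^ (k - 1)`. For a trailing `2 × 2` block the
entries of `adj M` are, up to sign, the bordered minors `a_{ij}^{(n-2)}` with `i` and `j`
exchanged, and Jacobi's identity becomes Sylvester's.
-/

namespace Matrix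

section Jacobi

variable {m o R : Type*} [Fintype m] [Fintype o] [DecidableEq m] [DecidableEq o] [CommRing R]

theorem mul_fromBlocks_adjugate_toBlocks (P : Matrix (m ⊕ o) (m ⊕ o) R) :
    P * fromBlocks 1 P.adjugate.toBlocks₁₂ 0 P.adjugate.toBlocks₂₂ =
      fromBlocks P.toBlocks₁₁ 0 P.toBlocks₂₁ (P.det • 1) := by
  have h := congrFun₂ (mul_adjugate P)
  simp only [mul_apply, Fintype.sum_sum_type, smul_apply, one_apply, smul_eq_mul] at h
  ext (i | i) (j | j)
  · simp [mul_apply, Fintype.sum_sum_type, one_apply, toBlocks₁₁]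
  · simpa [mul_apply, Fintype.sum_sum_type, toBlocks₁₂, toBlocks₂₂] using h (.inl i) (.inr j)
  · simp [mul_apply, Fintype.sum_sum_type, one_apply, toBlocks₂₁]
  · simpa [mul_apply, Fintype.sum_sum_type, one_apply, toBlocks₁₂, toBlocks₂₂] using
      h (.inr i) (.inr j)

theorem det_mul_det_toBlocks₂₂_adjugate (P : Matrix (m ⊕ o) (m ⊕ o) R) :
    P.det * P.adjugate.toBlocks₂₂.det = P.toBlocks₁₁.det * P.det ^ Fintype.card o := by
  simpa [det_fromBlocks_zero₂₁, det_fromBlocks_zero₁₂, det_smul] using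
    congrArg det (mul_fromBlocks_adjugate_toBlocks P)

theorem det_toBlocks₂₂_adjugate {k : ℕ} (P : Matrix (m ⊕ o) (m ⊕ o) R)
    (hk : Fintype.card o = k + 1) :
    P.adjugate.toBlocks₂₂.det = P.toBlocks₁₁.det * P.det ^ k := by
  let X := mvPolynomialX (m ⊕ o) (m ⊕ o) ℤ
  have hX : X.adjugate.toBlocks₂₂.det = X.toBlocks₁₁.det * X.det ^ k := by
    apply mul_left_cancel₀ (det_mvPolynomialX_ne_zero (m ⊕ o) ℤ)
    rw [det_mul_det_toBlocks₂₂_adjugate, hk]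
    ring
  let φ := MvPolynomial.aeval (R := ℤ) fun p : (m ⊕ o) × (m ⊕ o) => P p.1 p.2
  have h := congrArg φ hX
  simp only [map_mul, map_pow, AlgHom.map_det] at h
  rw [← mvPolynomialX_mapMatrix_aeval ℤ P, ← AlgHom.map_adjugate]
  exact h

end Jacobi

section Sylvester

variable {R : Type*} [CommRing R] {m : ℕ}

theorem adjugate_mul_adjugate_sub_last_two (M : Matrix (Fin (m + 2)) (Fin (m + 2)) R) :
    M.adjugate (Fin.last m).castSucc (Fin.last m).castSucc *
          M.adjugate (Fin.last (m + 1)) (Fin.last (m + 1)) -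
        M.adjugate (Fin.last m).castSucc (Fin.last (m + 1)) *
          M.adjugate (Fin.last (m + 1)) (Fin.last m).castSucc =
      (M.submatrix (Fin.castAdd 2) (Fin.castAdd 2)).det * M.det := by
  have h := det_toBlocks₂₂_adjugate (M.submatrix finSumFinEquiv finSumFinEquiv) (k := 1) rfl
  rw [adjugate_submatrix_equiv_self, det_submatrix_equiv_self, det_fin_two, pow_one] at h
  exact h

/-- The paper's `a_{i,j}^{(m)}`, for `M` of size `m + 2`. -/
def borderedMinor (M : Matrix (Fin (m + 2)) (Fin (m + 2)) R) (i j : Fin (m + 2)) : R :=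
  (M.submatrix (Fin.snoc (Fin.castAdd 2) i) (Fin.snoc (Fin.castAdd 2) j)).det

theorem _root_.Fin.snoc_castAdd_castSucc_last :
    Fin.snoc (α := fun _ => Fin (m + 2)) (Fin.castAdd 2) (Fin.last m).castSucc =
      (Fin.last (m + 1)).succAbove := by
  ext i
  refine Fin.lastCases ?_ (fun j => ?_) i <;> simp

theorem _root_.Fin.snoc_castAdd_last :
    Fin.snoc (α := fun _ => Fin (m + 2)) (Fin.castAdd 2) (Fin.last (m + 1)) =
      (Fin.last m).castSucc.succAbove := by
  ext i
  refine Fin.lastCases ?_ (fun j => ?_) i <;> simp [Fin.succAbove, Fin.lt_def]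

theorem det_mul_det_submatrix_castAdd (M : Matrix (Fin (m + 2)) (Fin (m + 2)) R) :
    M.det * (M.submatrix (Fin.castAdd 2) (Fin.castAdd 2)).det =
      M.borderedMinor (Fin.last m).castSucc (Fin.last m).castSucc *
          M.borderedMinor (Fin.last (m + 1)) (Fin.last (m + 1)) -
        M.borderedMinor (Fin.last m).castSucc (Fin.last (m + 1)) *
          M.borderedMinor (Fin.last (m + 1)) (Fin.last m).castSucc := by
  have h := M.adjugate_mul_adjugate_sub_last_two
  simp only [adjugate_fin_succ_eq_det_submatrix, borderedMinor, Fin.snoc_castAdd_castSucc_last,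
    Fin.snoc_castAdd_last, Fin.val_castSucc, Fin.val_last] at h ⊢
  rw [Even.neg_one_pow ⟨m, rfl⟩, Even.neg_one_pow ⟨m + 1, rfl⟩, Odd.neg_one_pow ⟨m, by ring⟩,
    Odd.neg_one_pow ⟨m, by ring⟩] at h
  linear_combination -h

end Sylvester

end Matrix

/-- Sylvester's identity in the case `t = n − 1` (i.e. bordering the leading
principal submatrix of order `n−2`):
`det M · (leading minor of order n−2) =
 a_{n-1,n-1}·a_{n,n} − a_{n-1,n}·a_{n,n-1}`. -/
theorem sylvester_two_by_two {K : Type*} [Field K] {n : ℕ} (hn : 2 ≤ n)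
    (M : Matrix (Fin n) (Fin n) K) :
    M.det *
      (M.submatrix (Fin.castLE (show n - 2 ≤ n by omega))
        (Fin.castLE (show n - 2 ≤ n by omega))).det =
    (M.submatrix (Fin.snoc (Fin.castLE (show n - 2 ≤ n by omega)) (⟨n - 2, by omega⟩ : Fin n))
        (Fin.snoc (Fin.castLE (show n - 2 ≤ n by omega)) (⟨n - 2, by omega⟩ : Fin n))).det *
      (M.submatrix (Fin.snoc (Fin.castLE (show n - 2 ≤ n by omega)) (⟨n - 1, by omega⟩ : Fin n))
        (Fin.snoc (Fin.castLE (show n - 2 ≤ n by omega)) (⟨n - 1, by omega⟩ : Fin n))).det -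
    (M.submatrix (Fin.snoc (Fin.castLE (show n - 2 ≤ n by omega)) (⟨n - 2, by omega⟩ : Fin n))
        (Fin.snoc (Fin.castLE (show n - 2 ≤ n by omega)) (⟨n - 1, by omega⟩ : Fin n))).det *
      (M.submatrix (Fin.snoc (Fin.castLE (show n - 2 ≤ n by omega)) (⟨n - 1, by omega⟩ : Fin n))
        (Fin.snoc (Fin.castLE (show n - 2 ≤ n by omega)) (⟨n - 2, by omega⟩ : Fin n))).det := by
  obtain ⟨m, rfl⟩ : ∃ m, n = m + 2 := ⟨n - 2, by omega⟩
  exact M.det_mul_det_submatrix_castAdd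
end
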